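/- arXiv:2309.02925 — 3 statements merged into one kernel-verified Lean document; each statement's English description precedes it below -/
import Mathlib

section
/- For every nonnegative integer j ≥ 1, ∑_{ℓ=0}^{j−1} a_ℓ/(j−ℓ) = 4·a_j·∑_{ℓ=0}^{j−1} 1/(2ℓ+1), where a_ℓ = ((1/2)_ℓ)²/(ℓ!)² and (x)_ℓ denotes the Pochhammer symbol (rising factorial). -/
/-- Pochhammer symbol (rising factorial) for a real argument. -/
noncomputable def poch (x : ℝ) (n : ℕ) : ℝ := ∏ i ∈ Finset.range n, (x + (i : ℝ))

/-- The sequence a_ℓ = ((1/2)_ℓ / ℓ!)². -/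
noncomputable def aSeq (ℓ : ℕ) : ℝ := (poch (1 / 2) ℓ / (Nat.factorial ℓ : ℝ))^2

lemma poch_half_pos (n : ℕ) : 0 < poch (1/2) n := by
  unfold poch
  apply Finset.prod_pos
  intro i _
  positivity

lemma aSeq_pos (n : ℕ) : 0 < aSeq n := by
  unfold aSeq
  have h1 := poch_half_pos n
  have h2 : (0:ℝ) < (Nat.factorial n : ℝ) := by exact_mod_cast Nat.factorial_pos n
  positivity

lemma aSeq_succ (ℓ : ℕ) :
    aSeq (ℓ+1) = aSeq ℓ * ((2*(ℓ:ℝ)+1)/(2*(ℓ:ℝ)+2))^2 := by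
  have hp : poch (1/2) (ℓ+1) = poch (1/2) ℓ * (1/2 + (ℓ:ℝ)) :=
    Finset.prod_range_succ _ _
  have hf : ((Nat.factorial (ℓ+1) : ℕ) : ℝ) = ((ℓ:ℝ)+1) * (Nat.factorial ℓ : ℝ) := by
    rw [Nat.factorial_succ]; push_cast; ring
  have hℓ1 : ((ℓ:ℝ)+1) ≠ 0 := by positivity
  have hfa : (Nat.factorial ℓ : ℝ) ≠ 0 := by
    exact_mod_cast (Nat.factorial_pos ℓ).ne'
  unfold aSeq
  rw [hp, hf]
  field_simp
  ring

lemma step_lemma (j : ℕ) :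
    aSeq j * ∑ ℓ ∈ Finset.range (j+1), aSeq ℓ / (((j:ℝ)+1) - (ℓ:ℝ)) =
      aSeq (j+1) * ∑ ℓ ∈ Finset.range j, aSeq ℓ / ((j:ℝ) - (ℓ:ℝ)) +
        4 * aSeq j * aSeq (j+1) / (2*(j:ℝ)+1) := by
  have haj := aSeq_pos j
  -- telescoping function
  set G : ℕ → ℝ := fun ℓ =>
    -(aSeq ℓ * aSeq j * (ℓ:ℝ)^2 / ((((j:ℝ)+1) - (ℓ:ℝ)) * ((j:ℝ)+1)^2)) with hG
  have key : ∀ ℓ ∈ Finset.range j,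
      aSeq j * (aSeq ℓ / (((j:ℝ)+1) - (ℓ:ℝ))) - aSeq (j+1) * (aSeq ℓ / ((j:ℝ) - (ℓ:ℝ)))
        = G (ℓ+1) - G ℓ := by
    intro ℓ hℓ
    have hlt : (ℓ:ℝ) < (j:ℝ) := by exact_mod_cast Finset.mem_range.mp hℓ
    have h1 : ((j:ℝ)) - (ℓ:ℝ) ≠ 0 := by linarith
    have h2 : (((j:ℝ)+1)) - (ℓ:ℝ) ≠ 0 := by linarith
    have h3 : ((j:ℝ)+1) ≠ 0 := by positivity
    have h4 : (2*(ℓ:ℝ)+2) ≠ 0 := by positivity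
    have h5 : (2*(j:ℝ)+2) ≠ 0 := by positivity
    have h2' : (((j:ℝ)+1)) - ((ℓ:ℝ)+1) ≠ 0 := by
      have : ((j:ℝ)+1) - ((ℓ:ℝ)+1) = (j:ℝ) - (ℓ:ℝ) := by ring
      rw [this]; exact h1
    rw [hG]
    simp only
    rw [aSeq_succ ℓ, aSeq_succ j]
    push_cast
    field_simp
    ring
  have hsum : ∑ ℓ ∈ Finset.range j,
      (aSeq j * (aSeq ℓ / (((j:ℝ)+1) - (ℓ:ℝ))) - aSeq (j+1) * (aSeq ℓ / ((j:ℝ) - (ℓ:ℝ))))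
      = G j - G 0 := by
    rw [Finset.sum_congr rfl key]
    exact Finset.sum_range_sub G j
  rw [Finset.sum_range_succ]
  have hG0 : G 0 = 0 := by simp [hG]
  have hexp : aSeq j * (∑ ℓ ∈ Finset.range j, aSeq ℓ / (((j:ℝ)+1) - (ℓ:ℝ))
        + aSeq j / (((j:ℝ)+1) - (j:ℝ)))
      - aSeq (j+1) * ∑ ℓ ∈ Finset.range j, aSeq ℓ / ((j:ℝ) - (ℓ:ℝ))
      = (G j - G 0) + aSeq j * (aSeq j / (((j:ℝ)+1) - (j:ℝ))) := by
    rw [← hsum, Finset.sum_sub_distrib, ← Finset.mul_sum, ← Finset.mul_sum]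
    ring
  have hfin : (G j - G 0) + aSeq j * (aSeq j / (((j:ℝ)+1) - (j:ℝ)))
      = 4 * aSeq j * aSeq (j+1) / (2*(j:ℝ)+1) := by
    rw [hG0, hG]
    simp only
    rw [aSeq_succ j]
    have h3 : ((j:ℝ)+1) ≠ 0 := by positivity
    have h6 : (2*(j:ℝ)+1) ≠ 0 := by positivity
    have h5 : (2*(j:ℝ)+2) ≠ 0 := by positivity
    have h7 : ((j:ℝ)+1) - (j:ℝ) = 1 := by ring
    rw [h7]
    field_simp
    ring
  linarith [hexp, hfin]

theorem stmt6 (j : ℕ) (hj : 1 ≤ j) :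
    ∑ ℓ ∈ Finset.range j, aSeq ℓ / ((j : ℝ) - (ℓ : ℝ)) =
      4 * aSeq j * ∑ ℓ ∈ Finset.range j, 1 / (2 * (ℓ : ℝ) + 1) := by
  induction j, hj using Nat.le_induction with
  | base =>
    simp only [Finset.sum_range_one]
    norm_num [aSeq, poch]
  | succ j hj ih =>
    have haj := (aSeq_pos j).ne'
    have hstep := step_lemma j
    have hcast : ((j+1:ℕ):ℝ) = (j:ℝ)+1 := by push_cast; ring
    apply mul_left_cancel₀ haj
    rw [hcast, hstep, ih, Finset.sum_range_succ]
    have h6 : (2*(j:ℝ)+1) ≠ 0 := by positivity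
    field_simp
end

section
/- For real u with 0 ≤ u < 1/16, ∑_{n=0}^{∞} binom(2n, n)²·uⁿ = (2/π)·K(√(16u)), where K is the complete elliptic integral of the first kind. -/
/-!
Expanding `1 / √(1 - t) = ∑ binom(2n, n) (t / 4)ⁿ` (the binomial series with exponent `-1/2`)
at `t = k² sin² θ` and integrating term by term against Wallis' formula
`∫₀^{π/2} sin^{2n} θ dθ = (π / 2) binom(2n, n) / 4ⁿ` gives
`∫₀^{π/2} dθ / √(1 - k² sin² θ) = (π / 2) ∑ binom(2n, n)² (k² / 16)ⁿ`;
the substitution `x = sin θ` turns the left-hand side into `K(k)`.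
-/

noncomputable def ellipticK (k : ℝ) : ℝ :=
  ∫ x in (0:ℝ)..1, 1 / Real.sqrt ((1 - x^2) * (1 - k^2 * x^2))

open Real Set MeasureTheory intervalIntegral

theorem Ring.succ_mul_choose_succ {K : Type*} [Field K] [CharZero K] (a : K) (n : ℕ) :
    (n + 1) * Ring.choose a (n + 1) = (a - n) * Ring.choose a n := by
  rw [Ring.choose_eq_smul, Ring.choose_eq_smul, descPochhammer_succ_right, Polynomial.smeval_mul,
    Polynomial.smeval_sub, Polynomial.smeval_X, Polynomial.smeval_natCast, Nat.factorial_succ]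
  simp only [smul_eq_mul, pow_one, pow_zero, nsmul_eq_mul, mul_one]
  push_cast
  field_simp

theorem Ring.choose_neg_one_div_two (n : ℕ) :
    Ring.choose (-1 / 2 : ℝ) n = (-1 / 4) ^ n * n.centralBinom := by
  induction n with
  | zero => simp
  | succ n ih =>
    have hc : ((n : ℝ) + 1) * (n + 1).centralBinom = 2 * (2 * n + 1) * n.centralBinom := by
      exact_mod_cast Nat.succ_mul_centralBinom_succ n
    apply mul_left_cancel₀ (show (n : ℝ) + 1 ≠ 0 by positivity)
    rw [Ring.succ_mul_choose_succ, ih]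
    linear_combination (1 / 4) * (-1 / 4 : ℝ) ^ n * hc

theorem Ring.choose_one_div_two_add_sub_one (n : ℕ) :
    Ring.choose ((1 / 2 : ℝ) + n - 1) n = n.centralBinom / 4 ^ n := by
  have h := Ring.choose_neg (1 / 2 : ℝ) n
  rw [neg_div', Ring.choose_neg_one_div_two, Units.smul_def, zsmul_eq_mul, Int.coe_negOnePow,
    Int.natAbs_natCast] at h
  calc Ring.choose ((1 / 2 : ℝ) + n - 1) n
      = ((-1) ^ n * (-1) ^ n) * Ring.choose ((1 / 2 : ℝ) + n - 1) n := by simp [← mul_pow]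
    _ = (-1) ^ n * ((-1 / 4) ^ n * n.centralBinom) := by rw [h, mul_assoc]
    _ = n.centralBinom / 4 ^ n := by
      rw [← mul_assoc, ← mul_pow, div_eq_inv_mul _ (4 ^ n), ← inv_pow]
      norm_num

theorem Real.hasSum_centralBinom_div_four_pow_mul_pow {t : ℝ} (ht : |t| < 1) :
    HasSum (fun n ↦ n.centralBinom / 4 ^ n * t ^ n) (1 / √(1 - t)) := by
  have h := (one_div_one_sub_rpow_hasFPowerSeriesOnBall_zero (1 / 2)).hasSum (y := t)
    (by simpa [enorm_eq_nnnorm, ← NNReal.coe_lt_coe] using ht)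
  simpa only [FormalMultilinearSeries.ofScalars_apply_eq, Ring.choose_one_div_two_add_sub_one,
    smul_eq_mul, zero_add, ← sqrt_eq_rpow] using h

theorem integral_sin_pow_even_zero_pi_div_two (n : ℕ) :
    ∫ x in 0..π / 2, sin x ^ (2 * n) = π / 2 * (n.centralBinom / 4 ^ n) := by
  induction n with
  | zero => simp
  | succ n ih =>
    have hc : ((n : ℝ) + 1) * (n + 1).centralBinom = 2 * (2 * n + 1) * n.centralBinom := by
      exact_mod_cast Nat.succ_mul_centralBinom_succ n
    rw [Nat.mul_succ, integral_sin_pow, ih, sin_zero, cos_pi_div_two]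
    push_cast
    rw [pow_succ (4 : ℝ)]
    field_simp
    linear_combination (-2 * π) * hc

theorem Real.sin_image_Ioo_zero_pi_div_two : sin '' Ioo 0 (π / 2) = Ioo 0 1 := by
  rw [continuousOn_sin.image_Ioo_of_strictMonoOn (by positivity), sin_zero, sin_pi_div_two]
  exact strictMonoOn_sin.mono (Icc_subset_Icc (by linarith [pi_pos]) le_rfl)

theorem ellipticK_eq_integral_sin (k : ℝ) :
    ellipticK k = ∫ θ in 0..π / 2, 1 / √(1 - k ^ 2 * sin θ ^ 2) := by
  have hsubst : ∀ θ ∈ Ioo 0 (π / 2),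
      |cos θ| • (1 / √((1 - sin θ ^ 2) * (1 - k ^ 2 * sin θ ^ 2)))
        = 1 / √(1 - k ^ 2 * sin θ ^ 2) := by
    intro θ hθ
    have hcos : 0 < cos θ := cos_pos_of_mem_Ioo ⟨by linarith [hθ.1, pi_pos], hθ.2⟩
    rw [← cos_sq', sqrt_mul (sq_nonneg _), sqrt_sq hcos.le, abs_of_pos hcos, smul_eq_mul,
      mul_one_div, div_mul_cancel_left₀ hcos.ne', one_div]
  rw [ellipticK, integral_of_le zero_le_one, integral_of_le (by positivity),
    integral_Ioc_eq_integral_Ioo, integral_Ioc_eq_integral_Ioo, ← sin_image_Ioo_zero_pi_div_two,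
    integral_image_eq_integral_abs_deriv_smul measurableSet_Ioo
      (fun θ _ ↦ (hasDerivAt_sin θ).hasDerivWithinAt) (injOn_sin.mono ?_),
    setIntegral_congr_fun measurableSet_Ioo hsubst]
  exact Ioo_subset_Icc_self.trans (Icc_subset_Icc (by linarith [pi_pos]) le_rfl)

theorem hasSum_integral_one_div_sqrt_one_sub_mul_sin_sq {m : ℝ} (hm : |m| < 1) :
    HasSum (fun n : ℕ ↦ π / 2 * (n.centralBinom ^ 2 / 16 ^ n * m ^ n))
      (∫ θ in 0..π / 2, 1 / √(1 - m * sin θ ^ 2)) := by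
  set c : ℕ → ℝ := fun n ↦ n.centralBinom / 4 ^ n * m ^ n
  have hterm : ∀ n, ∫ θ in 0..π / 2, c n * sin θ ^ (2 * n)
      = π / 2 * (n.centralBinom ^ 2 / 16 ^ n * m ^ n) := by
    intro n
    rw [intervalIntegral.integral_const_mul, integral_sin_pow_even_zero_pi_div_two,
      show (16 : ℝ) ^ n = (4 ^ n) ^ 2 by rw [← pow_mul, mul_comm, pow_mul]; norm_num]
    simp only [c]
    ring
  simp only [← hterm]
  refine hasSum_integral_of_dominated_convergence (fun n _ ↦ |c n|)
    (fun n ↦ (by fun_prop : Continuous fun θ ↦ c n * sin θ ^ (2 * n)).aestronglyMeasurable)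
    (fun n ↦ ae_of_all _ fun θ _ ↦ ?_) (ae_of_all _ fun _ _ ↦ ?_) intervalIntegrable_const
    (ae_of_all _ fun θ _ ↦ ?_)
  · rw [norm_mul, norm_pow, Real.norm_eq_abs, Real.norm_eq_abs]
    exact mul_le_of_le_one_right (abs_nonneg _) (pow_le_one₀ (abs_nonneg _) (abs_sin_le_one θ))
  · simpa [c, abs_mul, abs_pow, abs_div] using
      (hasSum_centralBinom_div_four_pow_mul_pow (t := |m|) (by simpa using hm)).summable
  · have hlt : |m * sin θ ^ 2| < 1 := by
      rw [abs_mul, abs_pow]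
      exact mul_lt_one_of_nonneg_of_lt_one_left (abs_nonneg _) hm
        (pow_le_one₀ (abs_nonneg _) (abs_sin_le_one θ))
    simpa [c, mul_pow, pow_mul, mul_assoc] using hasSum_centralBinom_div_four_pow_mul_pow hlt

theorem hasSum_centralBinom_sq_mul_pow_ellipticK {k : ℝ} (hk : |k| < 1) :
    HasSum (fun n : ℕ ↦ (n.centralBinom : ℝ) ^ 2 * (k ^ 2 / 16) ^ n) (2 / π * ellipticK k) := by
  have hk2 : |k ^ 2| < 1 := by rw [abs_pow]; exact pow_lt_one₀ (abs_nonneg k) hk two_ne_zero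
  have h := (hasSum_integral_one_div_sqrt_one_sub_mul_sin_sq hk2).mul_left (2 / π)
  rw [← ellipticK_eq_integral_sin] at h
  refine h.congr_fun fun n ↦ ?_
  rw [div_pow]
  field_simp

theorem stmt8 (u : ℝ) (hu0 : 0 ≤ u) (hu : u < 1 / 16) :
    ∑' n : ℕ, (Nat.choose (2 * n) n : ℝ)^2 * u^n = (2 / Real.pi) * ellipticK (Real.sqrt (16 * u)) := by
  have hk : |√(16 * u)| < 1 := by
    rw [abs_of_nonneg (sqrt_nonneg _), sqrt_lt' one_pos]
    linarith
  have h := hasSum_centralBinom_sq_mul_pow_ellipticK hk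
  rw [sq_sqrt (by positivity), mul_div_cancel_left₀ u (by norm_num)] at h
  simpa only [Nat.centralBinom_eq_two_mul_choose] using h.tsum_eq
end

section
/- For 0 < x < 1/16, the function F(x) = ∑_{n=0}^{∞} (−1)ⁿ·binom(2n,n)²·H_n·xⁿ satisfies the fourth-order differential equation x²(16x+1)²F⁗(x) + 5x(32x+1)(16x+1)F‴(x) + 4(1568x²+98x+1)F″(x) + 108(32x+1)F′(x) + 144F(x) = 0. -/
noncomputable def H (n : ℕ) : ℝ := ∑ k ∈ Finset.range n, 1 / ((k : ℝ) + 1)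

noncomputable def F (x : ℝ) : ℝ :=
  ∑' n : ℕ, (-1 : ℝ)^n * (Nat.choose (2 * n) n : ℝ)^2 * H n * x^n

/-!
The coefficients `a n = (-1)^n * (centralBinom n)^2 * H n` satisfy the three-term recurrence
`16 (2N+1)^2 (2N+3)^2 a N + 4 (N+1) (2N+3)^3 a (N+1) + (N+1) (N+2)^3 a (N+2) = 0`,
a consequence of `(n+1) * centralBinom (n+1) = 2 (2n+1) * centralBinom n` and
`H (n+1) = H n + 1/(n+1)`. Since `|a n| ≤ (n+1) 16^n`, the series may be differentiated
termwise on `|x| < 1/16`. Every term of the differential operator has the shape `x^j D^(j+s)`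
with `s ∈ {0, 1, 2}`, which sends `∑ c n x^n` to `∑ (N+s)(N+s-1)⋯(N+1-j) c (N+s) x^N` with
no boundary terms; hence the coefficient of `x^N` on the left-hand side is exactly the
recurrence at `N`.
-/

open Filter Topology

/-- `c n = O(n^k ρ^n)`, with the falling factorial `(n+k)(n+k-1)⋯(n+1)` in place of `n^k` so that
the class is closed under `derivCoeff` with an exact bound. -/
def PolyGeomBounded (ρ : ℝ) (c : ℕ → ℝ) : Prop :=
  ∃ C : ℝ, 0 ≤ C ∧ ∃ k : ℕ, ∀ n, |c n| ≤ C * (n + k).descFactorial k * ρ ^ n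

noncomputable def powerSeriesSum (c : ℕ → ℝ) (y : ℝ) : ℝ := ∑' n, c n * y ^ n

def derivCoeff (c : ℕ → ℝ) (n : ℕ) : ℝ := (n + 1) * c (n + 1)

lemma derivCoeff_iterate_apply (c : ℕ → ℝ) (k n : ℕ) :
    derivCoeff^[k] c n = (n + k).descFactorial k * c (n + k) := by
  induction k generalizing n with
  | zero => simp
  | succ k ih =>
    rw [Function.iterate_succ_apply', derivCoeff, ih, Nat.descFactorial_succ,
      show n + (k + 1) - k = n + 1 by omega, show n + 1 + k = n + (k + 1) by omega]
    push_cast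
    ring

section PowerSeries

variable {ρ : ℝ} {c : ℕ → ℝ}

lemma abs_mul_pow_le_of_bound (hρ : 0 ≤ ρ) {C : ℝ} (hC : 0 ≤ C) {k : ℕ}
    (hck : ∀ n, |c n| ≤ C * (n + k).descFactorial k * ρ ^ n) {r y : ℝ} (hy : |y| ≤ r)
    (n : ℕ) :
    |c n * y ^ n| ≤ C * ((n + k).descFactorial k * (ρ * r) ^ n) := by
  rw [abs_mul, abs_pow, mul_pow, ← mul_assoc, ← mul_assoc]
  gcongr
  exact hck n

lemma polyGeomBounded_derivCoeff (hρ : 0 ≤ ρ) (hc : PolyGeomBounded ρ c) :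
    PolyGeomBounded ρ (derivCoeff c) := by
  obtain ⟨C, hC, k, hck⟩ := hc
  refine ⟨C * ρ, by positivity, k + 1, fun n => ?_⟩
  have hdesc : ((n + (k + 1)).descFactorial (k + 1) : ℝ)
      = (n + 1) * (n + 1 + k).descFactorial k := by
    rw [Nat.descFactorial_succ, show n + (k + 1) - k = n + 1 by omega,
      show n + (k + 1) = n + 1 + k by omega]
    push_cast
    ring
  calc |derivCoeff c n| = (n + 1) * |c (n + 1)| := by
        rw [derivCoeff, abs_mul, abs_of_nonneg (by positivity)]
    _ ≤ (n + 1) * (C * (n + 1 + k).descFactorial k * ρ ^ (n + 1)) := by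
        gcongr
        exact_mod_cast hck (n + 1)
    _ = C * ρ * (n + (k + 1)).descFactorial (k + 1) * ρ ^ n := by
        rw [hdesc, pow_succ]
        ring

lemma polyGeomBounded_iterate_derivCoeff (hρ : 0 ≤ ρ) (hc : PolyGeomBounded ρ c) (k : ℕ) :
    PolyGeomBounded ρ (derivCoeff^[k] c) := by
  induction k with
  | zero => exact hc
  | succ k ih =>
    rw [Function.iterate_succ_apply']
    exact polyGeomBounded_derivCoeff hρ ih

namespace PolyGeomBounded

lemma summable_mul_pow (hρ : 0 ≤ ρ) (hc : PolyGeomBounded ρ c) {x : ℝ} (hx : ρ * |x| < 1) :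
    Summable fun n => c n * x ^ n := by
  obtain ⟨C, hC, k, hck⟩ := hc
  have hq : ‖ρ * |x|‖ < 1 := by rwa [Real.norm_eq_abs, abs_of_nonneg (by positivity)]
  exact .of_norm_bounded ((summable_descFactorial_mul_geometric_of_norm_lt_one k hq).mul_left C)
    (abs_mul_pow_le_of_bound hρ hC hck le_rfl)

theorem hasDerivAt_powerSeriesSum (hρ : 0 ≤ ρ) (hc : PolyGeomBounded ρ c) {x : ℝ}
    (hx : ρ * |x| < 1) :
    HasDerivAt (powerSeriesSum c) (powerSeriesSum (derivCoeff c) x) x := by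
  obtain ⟨r, hρr, hxr⟩ : ∃ r, ρ * r < 1 ∧ |x| < r :=
    ((((continuous_const_mul ρ).tendsto |x|).eventually (gt_mem_nhds hx)).filter_mono
      nhdsWithin_le_nhds |>.and self_mem_nhdsWithin).exists (f := 𝓝[>] |x|)
  have hball : ∀ y ∈ Metric.ball (0 : ℝ) r, ρ * |y| < 1 := fun y hy => by
    rw [mem_ball_zero_iff, Real.norm_eq_abs] at hy
    nlinarith
  obtain ⟨C, hC, k, hck⟩ := polyGeomBounded_derivCoeff hρ hc
  have hq : ‖ρ * r‖ < 1 := by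
    rwa [Real.norm_eq_abs, abs_of_nonneg (mul_nonneg hρ ((abs_nonneg x).trans hxr.le))]
  -- termwise differentiation of the tail `∑ c (n+1) y^(n+1)`, which avoids the junk `y^(0-1)`
  have htail := hasDerivAt_tsum_of_isPreconnected
    ((summable_descFactorial_mul_geometric_of_norm_lt_one k hq).mul_left C) Metric.isOpen_ball
    (convex_ball 0 r).isPreconnected (g := fun n y => c (n + 1) * y ^ (n + 1))
    (g' := fun n y => derivCoeff c n * y ^ n)
    (fun n y _ => ((hasDerivAt_pow (n + 1) y).const_mul (c (n + 1))).congr_deriv (by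
      rw [derivCoeff, Nat.add_sub_cancel]
      push_cast
      ring))
    (fun n y hy => abs_mul_pow_le_of_bound hρ hC hck (mem_ball_zero_iff.mp hy).le n)
    (Metric.mem_ball_self ((abs_nonneg x).trans_lt hxr)) (by simp)
    (mem_ball_zero_iff.mpr hxr)
  refine (htail.const_add (c 0)).congr_of_eventuallyEq ?_
  filter_upwards [Metric.isOpen_ball.mem_nhds (mem_ball_zero_iff.mpr hxr)] with y hy
  rw [powerSeriesSum, (summable_mul_pow hρ hc (hball y hy)).tsum_eq_zero_add]
  simp

theorem iteratedDeriv_powerSeriesSum (hρ : 0 ≤ ρ) (hc : PolyGeomBounded ρ c) (k : ℕ)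
    {x : ℝ} (hx : ρ * |x| < 1) :
    iteratedDeriv k (powerSeriesSum c) x = powerSeriesSum (derivCoeff^[k] c) x := by
  induction k generalizing x with
  | zero => rfl
  | succ k ih =>
    have hopen : IsOpen {y : ℝ | ρ * |y| < 1} := isOpen_lt (by fun_prop) continuous_const
    rw [iteratedDeriv_succ, Function.iterate_succ_apply',
      Filter.EventuallyEq.deriv_eq (eventually_of_mem (hopen.mem_nhds hx) fun y hy => ih hy)]
    exact ((polyGeomBounded_iterate_derivCoeff hρ hc k).hasDerivAt_powerSeriesSum hρ hx).deriv

theorem hasSum_pow_mul_iteratedDeriv (hρ : 0 ≤ ρ) (hc : PolyGeomBounded ρ c) (j s : ℕ)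
    {x : ℝ} (hx : ρ * |x| < 1) :
    HasSum (fun N : ℕ => (N + s).descFactorial (j + s) * c (N + s) * x ^ N)
      (x ^ j * iteratedDeriv (j + s) (powerSeriesSum c) x) := by
  rw [hc.iteratedDeriv_powerSeriesSum hρ _ hx, powerSeriesSum]
  have h := ((polyGeomBounded_iterate_derivCoeff hρ hc (j + s)).summable_mul_pow hρ
    hx).hasSum.mul_left (x ^ j)
  rw [← hasSum_nat_add_iff' j, Finset.sum_eq_zero fun i hi => ?_, sub_zero]
  · have hterm (n : ℕ) : x ^ j * (derivCoeff^[j + s] c n * x ^ n)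
        = (n + j + s).descFactorial (j + s) * c (n + j + s) * x ^ (n + j) := by
      rw [derivCoeff_iterate_apply, pow_add, add_assoc]
      ring
    simpa only [hterm] using h
  · rw [Nat.descFactorial_eq_zero_iff_lt.mpr (by have := Finset.mem_range.mp hi; omega)]
    simp

end PolyGeomBounded

end PowerSeries

theorem powerSeriesSum_ode_of_recurrence {a : ℕ → ℝ} (ha : PolyGeomBounded 16 a)
    (hrec : ∀ N : ℕ, 16 * (2 * N + 1) ^ 2 * (2 * N + 3) ^ 2 * a N
      + 4 * (N + 1) * (2 * N + 3) ^ 3 * a (N + 1) + (N + 1) * (N + 2) ^ 3 * a (N + 2) = 0)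
    {x : ℝ} (hx : 16 * |x| < 1) :
    x ^ 2 * (16 * x + 1) ^ 2 * iteratedDeriv 4 (powerSeriesSum a) x
      + 5 * x * (32 * x + 1) * (16 * x + 1) * iteratedDeriv 3 (powerSeriesSum a) x
      + 4 * (1568 * x ^ 2 + 98 * x + 1) * iteratedDeriv 2 (powerSeriesSum a) x
      + 108 * (32 * x + 1) * deriv (powerSeriesSum a) x
      + 144 * powerSeriesSum a x = 0 := by
  have T (j s : ℕ) := ha.hasSum_pow_mul_iteratedDeriv (by norm_num) j s hx
  have hsum := (T 2 2).add (((T 1 2).mul_left 5).add (((T 0 2).mul_left 4).add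
    (((T 3 1).mul_left 32).add (((T 2 1).mul_left 240).add (((T 1 1).mul_left 392).add
    (((T 0 1).mul_left 108).add (((T 4 0).mul_left 256).add (((T 3 0).mul_left 2560).add
    (((T 2 0).mul_left 6272).add (((T 1 0).mul_left 3456).add ((T 0 0).mul_left 144)))))))))))
  rw [eq_comm]
  convert hsum.tsum_eq using 1
  · refine ((tsum_congr fun N => ?_).trans tsum_zero).symm
    simp only [← descPochhammer_eval_eq_descFactorial ℝ, Nat.cast_add, Nat.cast_ofNat,
      Nat.reduceAdd, descPochhammer_succ_right, descPochhammer_zero, CharP.cast_eq_zero, sub_zero,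
      one_mul, Nat.cast_one, Polynomial.eval_mul, Polynomial.eval_X, Polynomial.eval_sub,
      Polynomial.eval_one, Polynomial.eval_ofNat, add_sub_cancel_right, zero_add, add_zero]
    linear_combination x ^ N * hrec N
  · simp only [Nat.reduceAdd, pow_one, pow_zero, one_mul, iteratedDeriv_one, iteratedDeriv_zero]
    ring

lemma H_succ (n : ℕ) : H (n + 1) = H n + 1 / (n + 1) := Finset.sum_range_succ _ _

lemma H_nonneg (n : ℕ) : 0 ≤ H n := Finset.sum_nonneg fun _ _ => by positivity

lemma H_le (n : ℕ) : H n ≤ n := by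
  simpa [H] using Finset.sum_le_card_nsmul (Finset.range n) (fun k : ℕ => 1 / ((k : ℝ) + 1)) 1
    fun k _ => div_le_one_of_le₀ (by simp) (by positivity)

noncomputable def coeffF (n : ℕ) : ℝ := (-1) ^ n * (Nat.centralBinom n : ℝ) ^ 2 * H n

lemma polyGeomBounded_coeffF : PolyGeomBounded 16 coeffF := by
  refine ⟨1, zero_le_one, 1, fun n => ?_⟩
  have hbinom : (Nat.centralBinom n : ℝ) ≤ 4 ^ n := by
    exact_mod_cast Nat.centralBinom_le_four_pow n
  rw [coeffF, abs_mul, abs_mul, abs_pow, abs_neg, abs_one, one_pow, one_mul, abs_pow,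
    Nat.abs_cast, abs_of_nonneg (H_nonneg n), Nat.descFactorial_one,
    show (16 : ℝ) ^ n = (4 ^ n) ^ 2 by rw [← pow_mul, mul_comm, pow_mul]; norm_num]
  push_cast
  calc (Nat.centralBinom n : ℝ) ^ 2 * H n ≤ (4 ^ n) ^ 2 * ((n : ℝ) + 1) := by
        gcongr
        · exact H_nonneg n
        · linarith [H_le n]
    _ = 1 * ((n : ℝ) + 1) * (4 ^ n) ^ 2 := by ring

lemma coeffF_recurrence (N : ℕ) :
    16 * (2 * N + 1) ^ 2 * (2 * N + 3) ^ 2 * coeffF N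
      + 4 * (N + 1) * (2 * N + 3) ^ 3 * coeffF (N + 1)
      + (N + 1) * (N + 2) ^ 3 * coeffF (N + 2) = 0 := by
  have hb1 : (Nat.centralBinom (N + 1) : ℝ) = 2 * (2 * N + 1) * Nat.centralBinom N / (N + 1) := by
    rw [eq_div_iff (by positivity)]
    exact_mod_cast (mul_comm _ _).trans (Nat.succ_mul_centralBinom_succ N)
  have hb2 : (Nat.centralBinom (N + 2) : ℝ)
      = 2 * (2 * N + 3) * Nat.centralBinom (N + 1) / (N + 2) := by
    rw [eq_div_iff (by positivity)]
    exact_mod_cast (mul_comm _ _).trans (Nat.succ_mul_centralBinom_succ (N + 1))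
  simp only [coeffF, show N + 2 = N + 1 + 1 from rfl, H_succ, pow_succ, hb2, hb1]
  push_cast
  field_simp
  ring

lemma F_eq_powerSeriesSum : F = powerSeriesSum coeffF := rfl

theorem stmt15 (x : ℝ) (hx0 : 0 < x) (hx1 : x < 1 / 16) :
    x^2 * (16 * x + 1)^2 * iteratedDeriv 4 F x
      + 5 * x * (32 * x + 1) * (16 * x + 1) * iteratedDeriv 3 F x
      + 4 * (1568 * x^2 + 98 * x + 1) * iteratedDeriv 2 F x
      + 108 * (32 * x + 1) * deriv F x
      + 144 * F x = 0 := by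
  have hx : 16 * |x| < 1 := by
    rw [abs_of_pos hx0]
    linarith
  rw [F_eq_powerSeriesSum]
  exact powerSeriesSum_ode_of_recurrence polyGeomBounded_coeffF coeffF_recurrence hx
end
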